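/- arXiv:1806.06237 — 5 statements merged into one kernel-verified Lean document; each statement's English description precedes it below -/
import Mathlib

section
/- Let λ be a positive integer, let f : [0,1] → [0,∞] be monotonically increasing, and let s₀, s₁, …, s_λ, s_∞ ∈ [0,1] satisfy s_∞ ≤ s_κ ≤ s₀ for every κ ∈ {1,…,λ}. Then (max_{κ∈[λ]} (κ·f(s_κ) + (λ−κ)·f(s_∞))) / (min_{κ∈[λ]} ((κ−1)·f(s₀) + (λ−κ+1)·f(s_κ))) ≥ 1/λ, where the ratio is interpreted as 1 if it is of the form 0/0 or ∞/∞. -/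
open scoped ENNReal

/-- The algebraic core of the 1/λ approximation guarantee (Theorem 1):
the minimum (over κ ∈ [λ]) of `(κ−1)·f(s₀) + (λ−κ+1)·f(s_κ)` is at most
`λ` times the maximum (over κ ∈ [λ]) of `κ·f(s_κ) + (λ−κ)·f(s_∞)`.
This is the division-free form of `num/den ≥ 1/λ` in `ℝ≥0∞`, consistent with
interpreting `0/0` and `∞/∞` as `1`. -/
theorem stmt0 (l : ℕ) (hl : 0 < l) (f : ℝ → ℝ≥0∞)
    (hf : MonotoneOn f (Set.Icc (0 : ℝ) 1))
    (s : ℕ → ℝ) (sinf : ℝ)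
    (hs0 : s 0 ∈ Set.Icc (0 : ℝ) 1) (hsinf : sinf ∈ Set.Icc (0 : ℝ) 1)
    (hs : ∀ κ ∈ Finset.Icc 1 l,
      s κ ∈ Set.Icc (0 : ℝ) 1 ∧ sinf ≤ s κ ∧ s κ ≤ s 0) :
    (Finset.Icc 1 l).inf
        (fun κ => (κ - 1 : ℕ) * f (s 0) + (l - κ + 1 : ℕ) * f (s κ))
      ≤ (l : ℝ≥0∞) *
        (Finset.Icc 1 l).sup
          (fun κ => (κ : ℕ) * f (s κ) + (l - κ : ℕ) * f sinf) := by
  have h1 : 1 ∈ Finset.Icc 1 l := Finset.mem_Icc.mpr ⟨le_refl 1, hl⟩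
  have hinf : (Finset.Icc 1 l).inf
      (fun κ => (κ - 1 : ℕ) * f (s 0) + (l - κ + 1 : ℕ) * f (s κ))
      ≤ (l : ℝ≥0∞) * f (s 1) := by
    refine le_trans (Finset.inf_le h1) ?_
    simp [Nat.sub_add_cancel hl]
  have hsup : f (s 1) ≤ (Finset.Icc 1 l).sup
      (fun κ => (κ : ℕ) * f (s κ) + (l - κ : ℕ) * f sinf) := by
    refine le_trans ?_ (Finset.le_sup h1)
    simp
  exact hinf.trans (mul_le_mul_right hsup _)
end

section
/- Let m ≥ 2 and 1 ≤ k < m. Let (θ*_j)_{j∈[m]} be real numbers, let T* ⊆ [m] with |T*| = k be a set such that θ*_{j₁} − θ*_{j₂} ≥ δ > 0 for every j₁ ∈ T* and j₂ ∉ T*. Let (θ̂_j)_{j∈[m]} be independent random variables with θ̂_j ~ N(θ*_j, σ_j²) and σ_j² ≤ σ̃² for all j. Let T̂ be any set of k indices with the k largest values of θ̂ (ties broken arbitrarily). Then P(T̂ ≠ T*) ≤ k(m−k)·exp(−δ²/(4σ̃²)). -/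
open MeasureTheory ProbabilityTheory
open scoped NNReal ENNReal

open Real

/-!
If `T̂ ≠ T*`, the two sets having the same size, some `j₁ ∈ T*` is missed and some `j₂ ∉ T*` is
selected, so `θ̂_{j₁} ≤ θ̂_{j₂}`. For each of the `k (m - k)` such pairs, the centred scores are
sub-Gaussian with parameter `σ̃²`, and the Chernoff bound for the difference of two independent
sub-Gaussian variables bounds this event by `exp (-δ² / (4σ̃²))`; a union bound concludes.
-/

namespace ProbabilityTheory

variable {Ω : Type*} {mΩ : MeasurableSpace Ω} {P : Measure Ω} {X Y : Ω → ℝ}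

lemma HasSubgaussianMGF.mono {c c' : ℝ≥0} (h : HasSubgaussianMGF X c P) (hc : c ≤ c') :
    HasSubgaussianMGF X c' P where
  integrable_exp_mul := h.integrable_exp_mul
  mgf_le t := (h.mgf_le t).trans (by gcongr)

lemma HasLaw.hasSubgaussianMGF_sub_of_gaussianReal [IsProbabilityMeasure P] {μ : ℝ} {v : ℝ≥0}
    (hX : HasLaw X (gaussianReal μ v) P) : HasSubgaussianMGF (fun ω ↦ X ω - μ) v P := by
  have hcentred := gaussianReal_sub_const hX μ
  rw [sub_self] at hcentred
  have hmgf (t : ℝ) := mgf_gaussianReal hcentred.map_eq t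
  refine ⟨fun t ↦ mgf_pos_iff.mp ?_, fun t ↦ ?_⟩
  · rw [hmgf]; exact exp_pos _
  · simp [hmgf]

lemma measureReal_le_le_exp_of_gaussianReal [IsProbabilityMeasure P] {μX μY δ : ℝ}
    {vX vY c : ℝ≥0} (hX : HasLaw X (gaussianReal μX vX) P) (hY : HasLaw Y (gaussianReal μY vY) P)
    (hXY : X ⟂ᵢ[P] Y) (hδ : 0 ≤ δ) (hgap : δ ≤ μX - μY) (hvX : vX ≤ c) (hvY : vY ≤ c) :
    P.real {ω | X ω ≤ Y ω} ≤ exp (-δ ^ 2 / (4 * c)) := by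
  have hmeanX : P[X] = μX := by rw [hX.integral_eq, integral_id_gaussianReal]
  have hmeanY : P[Y] = μY := by rw [hY.integral_eq, integral_id_gaussianReal]
  have hsubX := hX.hasSubgaussianMGF_sub_of_gaussianReal.mono hvX
  have hsubY := hY.hasSubgaussianMGF_sub_of_gaussianReal.mono hvY
  rw [← hmeanX] at hsubX
  rw [← hmeanY] at hsubY
  calc P.real {ω | X ω ≤ Y ω}
      ≤ exp (-(P[Y] - P[X]) ^ 2 / (2 * (c + c))) :=
        hsubX.measureReal_le_le_exp hsubY hXY (by linarith)
    _ ≤ exp (-δ ^ 2 / (4 * c)) := by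
        rw [hmeanX, hmeanY, exp_le_exp, neg_div, neg_div, neg_le_neg_iff,
          show (2 : ℝ) * (c + c) = 4 * c by ring]
        exact div_le_div_of_nonneg_right (by nlinarith) (by positivity)

end ProbabilityTheory

namespace Finset

lemma exists_le_of_ne_of_isTop {ι α : Type*} [Preorder α] {f : ι → α} {S T : Finset ι}
    (hcard : S.card = T.card) (hS : ∀ i ∈ S, ∀ j ∉ S, f j ≤ f i) (hne : S ≠ T) :
    ∃ i ∈ T, ∃ j ∉ T, f i ≤ f j := by
  obtain ⟨j, hjS, hjT⟩ := not_subset.mp fun h ↦ hne (eq_of_subset_of_card_le h hcard.ge)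
  obtain ⟨i, hiT, hiS⟩ := not_subset.mp fun h ↦ hne (eq_of_subset_of_card_le h hcard.le).symm
  exact ⟨i, hiT, j, hjT, hS j hjS i hiS⟩

end Finset

theorem stmt6_general {Ω : Type*} [MeasureSpace Ω] [IsProbabilityMeasure (ℙ : Measure Ω)]
    (m k : ℕ)
    (θstar : Fin m → ℝ) (Tstar : Finset (Fin m)) (hTcard : Tstar.card = k)
    (δ : ℝ) (hδ : 0 < δ)
    (hsep : ∀ j₁ ∈ Tstar, ∀ j₂ ∉ Tstar, δ ≤ θstar j₁ - θstar j₂)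
    (θhat : Fin m → Ω → ℝ) (v : Fin m → ℝ≥0) (vmax : ℝ≥0)
    (hind : iIndepFun θhat ℙ)
    (hdist : ∀ j, Measure.map (θhat j) ℙ = gaussianReal (θstar j) (v j))
    (hvar : ∀ j, v j ≤ vmax)
    (That : Ω → Finset (Fin m))
    (hThatCard : ∀ ω, (That ω).card = k)
    (hThatTop : ∀ ω, ∀ j₁ ∈ That ω, ∀ j₂ ∉ That ω, θhat j₂ ω ≤ θhat j₁ ω) :
    ℙ {ω | That ω ≠ Tstar} ≤
      ENNReal.ofReal ((k : ℝ) * (m - k) *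
        Real.exp (-δ ^ 2 / (4 * (vmax : ℝ)))) := by
  classical
  set pairs := Tstar ×ˢ Tstarᶜ
  have hlaw (j : Fin m) : HasLaw (θhat j) (gaussianReal (θstar j) (v j)) ℙ :=
    ⟨aemeasurable_of_map_neZero (by rw [hdist j]; infer_instance), hdist j⟩
  have hpair : ∀ p ∈ pairs, ℙ {ω | θhat p.1 ω ≤ θhat p.2 ω} ≤
      ENNReal.ofReal (exp (-δ ^ 2 / (4 * vmax))) := by
    rintro ⟨j₁, j₂⟩ hp
    obtain ⟨hj₁, hj₂⟩ : j₁ ∈ Tstar ∧ j₂ ∉ Tstar := by simpa [pairs] using hp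
    change ℙ {ω | θhat j₁ ω ≤ θhat j₂ ω} ≤ _
    rw [← ofReal_measureReal]
    exact ENNReal.ofReal_le_ofReal <| measureReal_le_le_exp_of_gaussianReal (hlaw j₁) (hlaw j₂)
      (hind.indepFun (by rintro rfl; exact hj₂ hj₁)) hδ.le (hsep j₁ hj₁ j₂ hj₂) (hvar j₁) (hvar j₂)
  have hcard : (pairs.card : ℝ) = k * (m - k) := by
    have hcompl : (Tstarᶜ.card : ℝ) + k = m := by
      rw [← hTcard]; exact_mod_cast (Tstar.card_compl_add_card).trans (Fintype.card_fin m)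
    rw [Finset.card_product, hTcard, Nat.cast_mul, ← hcompl]
    ring
  calc ℙ {ω | That ω ≠ Tstar}
      ≤ ℙ (⋃ p ∈ pairs, {ω | θhat p.1 ω ≤ θhat p.2 ω}) := measure_mono fun ω hω ↦ by
        obtain ⟨j₁, hj₁, j₂, hj₂, hle⟩ :=
          Finset.exists_le_of_ne_of_isTop (by rw [hThatCard, hTcard]) (hThatTop ω) hω
        exact Set.mem_biUnion (x := (j₁, j₂)) (by simpa [pairs] using ⟨hj₁, hj₂⟩) hle
    _ ≤ ∑ p ∈ pairs, ℙ {ω | θhat p.1 ω ≤ θhat p.2 ω} := measure_biUnion_finset_le _ _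
    _ ≤ pairs.card • ENNReal.ofReal (exp (-δ ^ 2 / (4 * vmax))) :=
        Finset.sum_le_card_nsmul _ _ _ hpair
    _ = ENNReal.ofReal (k * (m - k) * exp (-δ ^ 2 / (4 * vmax))) := by
        rw [nsmul_eq_mul, ← ENNReal.ofReal_natCast, ← ENNReal.ofReal_mul (by positivity), hcard]

/-- Lemma 1 (upper bound on top-k recovery error): with independent Gaussian estimated
scores `θ̂_j ~ N(θ*_j, σ_j²)`, `σ_j² ≤ σ̃²`, and a true top-`k` set `T*` separated by a
gap `δ > 0`, any selection `T̂` of `k` indices with the `k` largest estimated scores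
satisfies `P(T̂ ≠ T*) ≤ k(m−k)·exp(−δ²/(4σ̃²))`. -/
theorem stmt6 {Ω : Type*} [MeasureSpace Ω] [IsProbabilityMeasure (ℙ : Measure Ω)]
    (m k : ℕ) (hm : 2 ≤ m) (hk : 1 ≤ k) (hkm : k < m)
    (θstar : Fin m → ℝ) (Tstar : Finset (Fin m)) (hTcard : Tstar.card = k)
    (δ : ℝ) (hδ : 0 < δ)
    (hsep : ∀ j₁ ∈ Tstar, ∀ j₂ ∉ Tstar, δ ≤ θstar j₁ - θstar j₂)
    (θhat : Fin m → Ω → ℝ) (v : Fin m → ℝ≥0) (vmax : ℝ≥0)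
    (hind : iIndepFun θhat ℙ)
    (hdist : ∀ j, Measure.map (θhat j) ℙ = gaussianReal (θstar j) (v j))
    (hvar : ∀ j, v j ≤ vmax)
    (That : Ω → Finset (Fin m))
    (hThatCard : ∀ ω, (That ω).card = k)
    (hThatTop : ∀ ω, ∀ j₁ ∈ That ω, ∀ j₂ ∉ That ω, θhat j₂ ω ≤ θhat j₁ ω) :
    ℙ {ω | That ω ≠ Tstar} ≤
      ENNReal.ofReal ((k : ℝ) * (m - k) *
        Real.exp (-δ ^ 2 / (4 * (vmax : ℝ)))) :=
  stmt6_general m k θstar Tstar hTcard δ hδ hsep θhat v vmax hind hdist hvar That hThatCard hThatTop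
end

section
/- Let m ≥ 2, 1 ≤ k < m, 0 ≤ t ≤ k−1, and let (θ̂_j)_{j∈[m]} be real numbers and T* ⊆ [m] the set of the k papers with largest true scores (with respect to a fixed total order on papers by true score). Suppose that for every paper j₁ among the top k−t papers and every paper j₂ among the bottom m−k−t papers (i.e., ranked k+t+1 or lower), we have θ̂_{j₁} > θ̂_{j₂}. Then any set T̂ of k indices with the k largest values of θ̂ satisfies |T̂ Δ T*| ≤ 2t. -/
open scoped symmDiff

/-- Deterministic step for the Hamming-error upper bound: papers are indexed in
decreasing order of true score (so the true top-`k` set is `{j : j < k}`). If every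
paper among the top `k − t` out-scores (in estimated score) every paper ranked
`k + t + 1` or lower, then any set `T̂` of `k` indices carrying the `k` largest
estimated scores satisfies `|T̂ Δ T*| ≤ 2t`. -/
theorem stmt11 (m k t : ℕ) (hm : 2 ≤ m) (hk1 : 1 ≤ k) (hkm : k < m)
    (ht : t ≤ k - 1)
    (θhat : Fin m → ℝ)
    (hsep : ∀ j₁ j₂ : Fin m, (j₁ : ℕ) < k - t → k + t ≤ (j₂ : ℕ) →
      θhat j₂ < θhat j₁)
    (That : Finset (Fin m)) (hcard : That.card = k)
    (htop : ∀ j₁ ∈ That, ∀ j₂ ∉ That, θhat j₂ ≤ θhat j₁) :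
    (That ∆ (Finset.univ.filter fun j : Fin m => (j : ℕ) < k)).card ≤ 2 * t := by
  set Tstar := Finset.univ.filter fun j : Fin m => (j : ℕ) < k with hTs
  have htk : t ≤ k := le_trans ht (Nat.sub_le k 1)
  -- card of Tstar is k
  have hTscard : Tstar.card = k := by
    have : Tstar = Finset.map ⟨Fin.castLE hkm.le, Fin.castLE_injective _⟩ Finset.univ := by
      ext j
      simp only [hTs, Finset.mem_filter, Finset.mem_univ, true_and, Finset.mem_map,
        Function.Embedding.coeFn_mk]
      constructor
      · intro hj; exact ⟨⟨(j : ℕ), hj⟩, by ext; simp⟩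
      · rintro ⟨i, rfl⟩; simp
    rw [this]; simp
  have hcards : That.card = Tstar.card := by rw [hcard, hTscard]
  -- symmDiff card
  have hsymm : (That ∆ Tstar).card = (That \ Tstar).card + (Tstar \ That).card := by
    rw [symmDiff_def, Finset.sup_eq_union, Finset.card_union_of_disjoint (disjoint_sdiff_sdiff)]
  have hcomm : (That \ Tstar).card = (Tstar \ That).card :=
    Finset.card_sdiff_comm hcards
  -- interval counting helper
  have hcount : ∀ (a b : ℕ) (S : Finset (Fin m)), (∀ j ∈ S, a ≤ (j : ℕ) ∧ (j : ℕ) < b) →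
      S.card ≤ b - a := by
    intro a b S hS
    have : S.card ≤ (Finset.Ico a b).card := by
      exact Finset.card_le_card_of_injOn (fun j => (j : ℕ))
        (fun j hj => Finset.mem_Ico.mpr (hS j hj))
        (fun x _ y _ h => Fin.val_injective h)
    simpa using this
  have key : (That \ Tstar).card ≤ t := by
    by_cases hA : ∀ j ∈ That, (j : ℕ) < k + t
    · -- That \ Tstar ⊆ [k, k+t)
      have := hcount k (k + t) (That \ Tstar) ?_
      · simpa using this
      · intro j hj
        rw [Finset.mem_sdiff] at hj
        obtain ⟨hj1, hj2⟩ := hj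
        simp only [hTs, Finset.mem_filter, Finset.mem_univ, true_and, not_lt] at hj2
        exact ⟨hj2, hA j hj1⟩
    · push_neg at hA
      obtain ⟨j₂, hj₂, hj₂ge⟩ := hA
      -- all j₁ < k - t are in That
      have hin : ∀ j₁ : Fin m, (j₁ : ℕ) < k - t → j₁ ∈ That := by
        intro j₁ h1
        by_contra hc
        exact absurd (htop j₂ hj₂ j₁ hc) (not_le.mpr (hsep j₁ j₂ h1 hj₂ge))
      rw [hcomm]
      have := hcount (k - t) k (Tstar \ That) ?_
      · calc (Tstar \ That).card ≤ k - (k - t) := this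
          _ = t := by omega
      · intro j hj
        rw [Finset.mem_sdiff] at hj
        obtain ⟨hj1, hj2⟩ := hj
        simp only [hTs, Finset.mem_filter, Finset.mem_univ, true_and] at hj1
        refine ⟨?_, hj1⟩
        by_contra hlt
        exact hj2 (hin j (by omega))
  calc (That ∆ Tstar).card = (That \ Tstar).card + (Tstar \ That).card := hsymm
    _ ≤ t + t := by rw [← hcomm]; omega
    _ = 2 * t := by ring
end

section
/- For every ε ∈ (0, 0.3), with m = n = 4 and λ = μ = 2, the similarity matrix S_ε ∈ [0,1]^{4×4} with rows (0.3+ε, 1, 1, 0), (0.3−ε, 0, 1, 1), (0, 0.1, 0, 0.3), (0, 0.1, 0, 0.3) has optimal max-min fairness max_{A∈𝒜} min_j ∑_{i∈R_A(j)} s_{ij} equal to 0.6, and there exist two feasible assignments A₁, A₂ with fairness 0.3 + ε and 0.2 respectively such that max(Γ(A₁), Γ(A₂))/Γ(A^HARD) = 1/2 + ε/0.6. -/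
/-- A feasible assignment for `m = n = 4`, `λ = μ = 2`: each paper gets exactly 2
distinct reviewers and each reviewer reviews at most 2 papers. -/
def Feasible4 (A : Fin 4 → Finset (Fin 4)) : Prop :=
  (∀ j, (A j).card = 2) ∧
    ∀ i, (Finset.univ.filter fun j => i ∈ A j).card ≤ 2

/-- Max-min fairness of an assignment: minimum over papers of the sum of the
similarities of the assigned reviewers. -/
noncomputable def fairness4 (S : Fin 4 → Fin 4 → ℝ) (A : Fin 4 → Finset (Fin 4)) : ℝ :=
  Finset.univ.inf' Finset.univ_nonempty (fun j => ∑ i ∈ A j, S i j)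

/-- Tightness of the `1/λ` analysis (Appendix B.3): for every `ε ∈ (0, 0.3)`, the
explicit `4×4` similarity matrix `S_ε` has optimal max-min fairness exactly `0.6`, yet
there exist two feasible assignments with fairness `0.3 + ε` and `0.2` respectively,
and `max(0.3+ε, 0.2)/0.6 = 1/2 + ε/0.6`. -/
theorem stmt14 (ε : ℝ) (hε : ε ∈ Set.Ioo (0 : ℝ) 0.3) :
    let S : Fin 4 → Fin 4 → ℝ :=
      ![![0.3 + ε, 1, 1, 0], ![0.3 - ε, 0, 1, 1],
        ![0, 0.1, 0, 0.3], ![0, 0.1, 0, 0.3]]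
    (∀ A, Feasible4 A → fairness4 S A ≤ 0.6) ∧
      (∃ A, Feasible4 A ∧ fairness4 S A = 0.6) ∧
      (∃ A₁, Feasible4 A₁ ∧ fairness4 S A₁ = 0.3 + ε) ∧
      (∃ A₂, Feasible4 A₂ ∧ fairness4 S A₂ = 0.2) ∧
      max (0.3 + ε) 0.2 / 0.6 = 1 / 2 + ε / 0.6 := by
  obtain ⟨hε0, hε3⟩ := hε
  intro S
  refine ⟨?_, ?_, ?_, ?_, ?_⟩
  · -- upper bound
    intro A hA
    have h1 : fairness4 S A ≤ ∑ i ∈ A 0, S i 0 :=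
      Finset.inf'_le _ (Finset.mem_univ 0)
    have h2 : ∑ i ∈ A 0, S i 0 ≤ ∑ i ∈ (Finset.univ : Finset (Fin 4)), S i 0 := by
      apply Finset.sum_le_sum_of_subset_of_nonneg (Finset.subset_univ _)
      intro i _ _
      fin_cases i <;> simp [S, Matrix.vecHead, Matrix.vecTail] <;> linarith
    have h3 : ∑ i ∈ (Finset.univ : Finset (Fin 4)), S i 0 = 0.6 := by
      simp [Fin.sum_univ_four, S, Matrix.vecHead, Matrix.vecTail]
      ring
    linarith
  · -- optimal assignment
    refine ⟨![{0,1}, {0,3}, {1,2}, {2,3}], by unfold Feasible4; decide, ?_⟩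
    unfold fairness4
    apply le_antisymm
    · refine le_trans (Finset.inf'_le _ (Finset.mem_univ 0)) ?_
      simp [S, Matrix.vecHead, Matrix.vecTail]
      linarith
    · apply Finset.le_inf'
      intro j _
      fin_cases j <;> simp [S, Matrix.vecHead, Matrix.vecTail] <;> linarith
  · refine ⟨![{0,2}, {0,3}, {1,2}, {1,3}], by unfold Feasible4; decide, ?_⟩
    unfold fairness4
    apply le_antisymm
    · refine le_trans (Finset.inf'_le _ (Finset.mem_univ 0)) ?_
      simp [S, Matrix.vecHead, Matrix.vecTail]
    · apply Finset.le_inf'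
      intro j _
      fin_cases j <;> simp [S, Matrix.vecHead, Matrix.vecTail] <;> linarith
  · refine ⟨![{0,1}, {2,3}, {0,1}, {2,3}], by unfold Feasible4; decide, ?_⟩
    unfold fairness4
    apply le_antisymm
    · refine le_trans (Finset.inf'_le _ (Finset.mem_univ 1)) ?_
      simp [S, Matrix.vecHead, Matrix.vecTail]
      linarith
    · apply Finset.le_inf'
      intro j _
      fin_cases j <;> simp [S, Matrix.vecHead, Matrix.vecTail] <;> linarith
  · rw [max_eq_left (by linarith)]
    ring
end

section
/- For every positive integer λ there exists a similarity matrix S ∈ [0,1]^{2λ×2λ} (with n = m = 2λ and μ = λ) such that: (i) every feasible assignment maximizing the cumulative similarity ∑_{j} ∑_{i∈R_A(j)} s_{ij} has max-min fairness min_j ∑_{i∈R_A(j)} s_{ij} = 0; and (ii) there exists a feasible assignment A' with min_j ∑_{i∈R_{A'}(j)} s_{ij} = 0.4·λ ≥ λ/4. -/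
namespace Stmt15Aux

variable (lam : ℕ)

def Tset : Finset (Fin (2 * lam)) := Finset.univ.filter fun i => (i : ℕ) < lam

def Smat (i j : Fin (2 * lam)) : ℝ :=
  if (i : ℕ) < lam then (if (j : ℕ) < lam then 1 else 0.4)
  else (if (j : ℕ) < lam then 0.4 else 0)

lemma mem_Tset (i : Fin (2 * lam)) : i ∈ Tset lam ↔ (i : ℕ) < lam := by
  simp [Tset]

lemma Tcard (hl : 0 < lam) : (Tset lam).card = lam := by
  have h : Tset lam = Finset.Iio (⟨lam, by omega⟩ : Fin (2 * lam)) := by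
    ext i; simp [Tset, Finset.mem_Iio, Fin.lt_def]
  rw [h, Fin.card_Iio]

lemma Tcard_compl (hl : 0 < lam) : (Tset lam)ᶜ.card = lam := by
  rw [Finset.card_compl, Fintype.card_fin, Tcard lam hl]; omega

lemma sumS (R : Finset (Fin (2 * lam))) (j : Fin (2 * lam)) :
    ∑ i ∈ R, Smat lam i j =
      if (j : ℕ) < lam then ((R ∩ Tset lam).card : ℝ) + 0.4 * ((R \ Tset lam).card : ℝ)
      else 0.4 * ((R ∩ Tset lam).card : ℝ) := by
  rw [← Finset.sum_inter_add_sum_sdiff R (Tset lam)]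
  have h1 : ∑ i ∈ R ∩ Tset lam, Smat lam i j
      = ((R ∩ Tset lam).card : ℝ) * (if (j : ℕ) < lam then (1:ℝ) else 0.4) := by
    rw [Finset.sum_congr rfl (fun i hi => ?_), Finset.sum_const, nsmul_eq_mul]
    have : (i : ℕ) < lam := by
      have := (Finset.mem_inter.mp hi).2; rwa [mem_Tset] at this
    simp [Smat, this]
  have h2 : ∑ i ∈ R \ Tset lam, Smat lam i j
      = ((R \ Tset lam).card : ℝ) * (if (j : ℕ) < lam then (0.4:ℝ) else 0) := by
    rw [Finset.sum_congr rfl (fun i hi => ?_), Finset.sum_const, nsmul_eq_mul]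
    have : ¬ (i : ℕ) < lam := by
      have := (Finset.mem_sdiff.mp hi).2; rwa [mem_Tset] at this
    simp [Smat, this]
  rw [h1, h2]
  split_ifs <;> ring

/-- capacity bound: total top-reviewer incidences -/
lemma capacity (hl : 0 < lam) (A : Fin (2 * lam) → Finset (Fin (2 * lam)))
    (hA2 : ∀ i, (Finset.univ.filter fun j => i ∈ A j).card ≤ lam) :
    ∑ j, (A j ∩ Tset lam).card ≤ lam * lam := by
  have key : ∀ j, (A j ∩ Tset lam).card = ∑ i ∈ Tset lam, if i ∈ A j then 1 else 0 := by
    intro j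
    rw [← Finset.card_filter]
    congr 1
    ext i; simp [Finset.mem_filter, and_comm]
  calc ∑ j, (A j ∩ Tset lam).card
      = ∑ j, ∑ i ∈ Tset lam, if i ∈ A j then 1 else 0 := by
        exact Finset.sum_congr rfl fun j _ => key j
    _ = ∑ i ∈ Tset lam, ∑ j, if i ∈ A j then 1 else 0 := Finset.sum_comm
    _ = ∑ i ∈ Tset lam, (Finset.univ.filter fun j => i ∈ A j).card := by
        exact Finset.sum_congr rfl fun i _ => (Finset.card_filter _ _).symm
    _ ≤ ∑ i ∈ Tset lam, lam := Finset.sum_le_sum fun i _ => hA2 i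
    _ = lam * lam := by rw [Finset.sum_const, Tcard lam hl, smul_eq_mul]

/-- the cumulative similarity formula -/
lemma cumul_formula (hl : 0 < lam) (A : Fin (2 * lam) → Finset (Fin (2 * lam)))
    (hA1 : ∀ j, (A j).card = lam) :
    ∑ j, ∑ i ∈ A j, Smat lam i j
      = 0.4 * lam * lam + 0.6 * (∑ j ∈ Tset lam, ((A j ∩ Tset lam).card : ℝ))
        + 0.4 * (∑ j ∈ (Tset lam)ᶜ, ((A j ∩ Tset lam).card : ℝ)) := by
  rw [← Finset.sum_add_sum_compl (Tset lam)]
  have h1 : ∑ j ∈ Tset lam, ∑ i ∈ A j, Smat lam i j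
      = ∑ j ∈ Tset lam, (0.4 * lam + 0.6 * ((A j ∩ Tset lam).card : ℝ)) := by
    refine Finset.sum_congr rfl fun j hj => ?_
    rw [sumS, if_pos ((mem_Tset lam j).mp hj)]
    have hcd : (A j ∩ Tset lam).card + (A j \ Tset lam).card = lam := by
      rw [Finset.card_inter_add_card_sdiff, hA1 j]
    have : ((A j \ Tset lam).card : ℝ) = lam - ((A j ∩ Tset lam).card : ℝ) := by
      have := congrArg (Nat.cast : ℕ → ℝ) hcd
      push_cast at this ⊢; linarith
    rw [this]; ring
  have h2 : ∑ j ∈ (Tset lam)ᶜ, ∑ i ∈ A j, Smat lam i j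
      = ∑ j ∈ (Tset lam)ᶜ, 0.4 * ((A j ∩ Tset lam).card : ℝ) := by
    refine Finset.sum_congr rfl fun j hj => ?_
    rw [sumS, if_neg]
    rw [Finset.mem_compl, mem_Tset] at hj; exact hj
  rw [h1, h2, Finset.sum_add_distrib, Finset.sum_const, Tcard lam hl, nsmul_eq_mul,
    ← Finset.mul_sum, ← Finset.mul_sum]
  ring

lemma Smat_nonneg (i j : Fin (2 * lam)) : 0 ≤ Smat lam i j := by
  unfold Smat; split_ifs <;> norm_num

end Stmt15Aux

open Stmt15Aux in
/-- Sub-optimality of maximizing cumulative similarity: for every `λ ≥ 1` there is a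
similarity matrix `S ∈ [0,1]^{2λ×2λ}` (with `n = m = 2λ`, `μ = λ`) such that every
feasible assignment maximizing the cumulative similarity has max-min fairness `0`,
while some feasible assignment has max-min fairness `0.4·λ ≥ λ/4`. -/
theorem stmt15 (lam : ℕ) (hl : 0 < lam) :
    ∃ S : Fin (2 * lam) → Fin (2 * lam) → ℝ,
      (∀ i j, S i j ∈ Set.Icc (0 : ℝ) 1) ∧
      -- feasibility: each paper gets λ distinct reviewers, each reviewer ≤ μ = λ papers
      (let Feas : (Fin (2 * lam) → Finset (Fin (2 * lam))) → Prop :=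
        fun A => (∀ j, (A j).card = lam) ∧
          ∀ i, (Finset.univ.filter fun j => i ∈ A j).card ≤ lam
      let ne : (Finset.univ : Finset (Fin (2 * lam))).Nonempty :=
        Finset.univ_nonempty_iff.mpr ⟨⟨0, by positivity⟩⟩
      let cumul : (Fin (2 * lam) → Finset (Fin (2 * lam))) → ℝ :=
        fun A => ∑ j, ∑ i ∈ A j, S i j
      let fairness : (Fin (2 * lam) → Finset (Fin (2 * lam))) → ℝ :=
        fun A => Finset.univ.inf' ne (fun j => ∑ i ∈ A j, S i j)
      (∀ A, Feas A → (∀ B, Feas B → cumul B ≤ cumul A) → fairness A = 0) ∧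
        ∃ A', Feas A' ∧ fairness A' = 0.4 * lam ∧ (lam : ℝ) / 4 ≤ 0.4 * lam) := by
  refine ⟨Smat lam, ?_, ?_⟩
  · intro i j
    constructor
    · exact Smat_nonneg lam i j
    · unfold Smat; split_ifs <;> norm_num
  intro Feas ne cumul fairness
  constructor
  · -- every maximizer has fairness 0
    intro A hA hmax
    obtain ⟨hA1, hA2⟩ := hA
    -- the optimal assignment
    set Bopt : Fin (2 * lam) → Finset (Fin (2 * lam)) :=
      fun j => if (j : ℕ) < lam then Tset lam else (Tset lam)ᶜ with hBopt
    have hBfeas : Feas Bopt := by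
      constructor
      · intro j
        by_cases hj : (j : ℕ) < lam
        · rw [show Bopt j = Tset lam from if_pos hj, Tcard lam hl]
        · rw [show Bopt j = (Tset lam)ᶜ from if_neg hj, Tcard_compl lam hl]
      · intro i
        by_cases hi : (i : ℕ) < lam
        · have h : (Finset.univ.filter fun j => i ∈ Bopt j) = Tset lam := by
            ext j
            simp only [Finset.mem_filter, Finset.mem_univ, true_and, hBopt]
            split_ifs with hj
            · simp [mem_Tset, hi, hj]
            · simp [Finset.mem_compl, mem_Tset, hi, hj]
          rw [h, Tcard lam hl]
        · have h : (Finset.univ.filter fun j => i ∈ Bopt j) = (Tset lam)ᶜ := by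
            ext j
            simp only [Finset.mem_filter, Finset.mem_univ, true_and, hBopt,
              Finset.mem_compl, mem_Tset]
            split_ifs with hj
            · simp [mem_Tset, hi, hj]
            · simp [Finset.mem_compl, mem_Tset, hi, hj]
          rw [h, Tcard_compl lam hl]
    have hBval : ∀ j, ∑ i ∈ Bopt j, Smat lam i j = if (j : ℕ) < lam then (lam : ℝ) else 0 := by
      intro j
      by_cases hj : (j : ℕ) < lam
      · rw [show Bopt j = Tset lam from if_pos hj, sumS, if_pos hj, if_pos hj,
          Finset.inter_self, Finset.sdiff_self, Tcard lam hl]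
        simp
      · rw [show Bopt j = (Tset lam)ᶜ from if_neg hj, sumS, if_neg hj, if_neg hj,
          show (Tset lam)ᶜ ∩ Tset lam = ∅ by ext x; simp]
        simp
    have hBcum : cumul Bopt = (lam : ℝ) * lam := by
      show (∑ j, ∑ i ∈ Bopt j, Smat lam i j) = (lam : ℝ) * lam
      rw [Finset.sum_congr rfl fun j _ => hBval j, ← Finset.sum_filter,
        show (Finset.univ.filter fun j : Fin (2 * lam) => (j : ℕ) < lam) = Tset lam from rfl,
        Finset.sum_const, Tcard lam hl, nsmul_eq_mul]
    have hmaxB := hmax Bopt hBfeas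
    rw [hBcum] at hmaxB
    -- counting
    set b : ℕ := ∑ j ∈ Tset lam, (A j ∩ Tset lam).card with hbdef
    set u : ℕ := ∑ j ∈ (Tset lam)ᶜ, (A j ∩ Tset lam).card with hudef
    have hb : b ≤ lam * lam := by
      calc b ≤ ∑ j ∈ Tset lam, lam := by
              refine Finset.sum_le_sum fun j _ => ?_
              calc (A j ∩ Tset lam).card ≤ (A j).card :=
                    Finset.card_le_card Finset.inter_subset_left
                _ = lam := hA1 j
        _ = lam * lam := by rw [Finset.sum_const, Tcard lam hl, smul_eq_mul]
    have hbu : b + u ≤ lam * lam := by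
      rw [hbdef, hudef, Finset.sum_add_sum_compl]
      exact capacity lam hl A hA2
    have hcumA : cumul A = 0.4 * lam * lam + 0.6 * (b : ℝ) + 0.4 * (u : ℝ) := by
      show (∑ j, ∑ i ∈ A j, Smat lam i j) = _
      rw [cumul_formula lam hl A hA1, hbdef, hudef]
      push_cast
      ring
    have hcum_ge : (lam : ℝ) * lam ≤ 0.4 * lam * lam + 0.6 * (b : ℝ) + 0.4 * (u : ℝ) := by
      rw [← hcumA]; exact hmaxB
    have hbR : (b : ℝ) ≤ (lam : ℝ) * lam := by exact_mod_cast hb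
    have hbuR : (b : ℝ) + (u : ℝ) ≤ (lam : ℝ) * lam := by exact_mod_cast hbu
    have huR : (u : ℝ) ≤ 0 := by linarith
    have hu0 : u = 0 := by exact_mod_cast le_antisymm huR (Nat.cast_nonneg u)
    -- the bottom paper j0 gets only zero-similarity reviewers
    set j0 : Fin (2 * lam) := ⟨lam, by omega⟩ with hj0def
    have hj0 : ¬ ((j0 : ℕ) < lam) := by simp [hj0def]
    have hj0c : j0 ∈ (Tset lam)ᶜ := by rw [Finset.mem_compl, mem_Tset]; exact hj0
    have hcard0 : (A j0 ∩ Tset lam).card = 0 :=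
      (Finset.sum_eq_zero_iff.mp hu0.symm.symm) j0 hj0c
    have hsum0 : ∑ i ∈ A j0, Smat lam i j0 = 0 := by
      rw [sumS, if_neg hj0, hcard0]
      simp
    refine le_antisymm ?_ ?_
    · calc fairness A ≤ ∑ i ∈ A j0, Smat lam i j0 :=
            Finset.inf'_le _ (Finset.mem_univ j0)
        _ = 0 := hsum0
    · exact Finset.le_inf' ne _ fun j _ => Finset.sum_nonneg fun i _ => Smat_nonneg lam i j
  · -- the fair assignment
    set Aopt : Fin (2 * lam) → Finset (Fin (2 * lam)) :=
      fun j => if (j : ℕ) < lam then (Tset lam)ᶜ else Tset lam with hAopt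
    refine ⟨Aopt, ⟨?_, ?_⟩, ?_, ?_⟩
    · intro j
      by_cases hj : (j : ℕ) < lam
      · rw [show Aopt j = (Tset lam)ᶜ from if_pos hj, Tcard_compl lam hl]
      · rw [show Aopt j = Tset lam from if_neg hj, Tcard lam hl]
    · intro i
      by_cases hi : (i : ℕ) < lam
      · have h : (Finset.univ.filter fun j => i ∈ Aopt j) = (Tset lam)ᶜ := by
          ext j
          simp only [Finset.mem_filter, Finset.mem_univ, true_and, hAopt,
            Finset.mem_compl, mem_Tset]
          split_ifs with hj
          · simp [Finset.mem_compl, mem_Tset, hi, hj]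
          · simp [mem_Tset, hi, hj]
        rw [h, Tcard_compl lam hl]
      · have h : (Finset.univ.filter fun j => i ∈ Aopt j) = Tset lam := by
          ext j
          simp only [Finset.mem_filter, Finset.mem_univ, true_and, hAopt, mem_Tset]
          split_ifs with hj
          · simp [Finset.mem_compl, mem_Tset, hi, hj]
          · simp [mem_Tset, hi, hj]
        rw [h, Tcard lam hl]
    · have hval : ∀ j : Fin (2 * lam),
          ∑ i ∈ Aopt j, Smat lam i j = 0.4 * (lam : ℝ) := by
        intro j
        by_cases hj : (j : ℕ) < lam
        · rw [show Aopt j = (Tset lam)ᶜ from if_pos hj, sumS, if_pos hj,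
            show (Tset lam)ᶜ ∩ Tset lam = ∅ by ext x; simp,
            show (Tset lam)ᶜ \ Tset lam = (Tset lam)ᶜ by ext x; simp,
            Tcard_compl lam hl]
          simp
        · rw [show Aopt j = Tset lam from if_neg hj, sumS, if_neg hj,
            Finset.inter_self, Tcard lam hl]
      show Finset.univ.inf' ne (fun j => ∑ i ∈ Aopt j, Smat lam i j) = 0.4 * (lam : ℝ)
      rw [show (fun j : Fin (2 * lam) => ∑ i ∈ Aopt j, Smat lam i j)
        = fun _ => 0.4 * (lam : ℝ) from funext hval, Finset.inf'_const]
    · have h0 : (0 : ℝ) ≤ (lam : ℝ) := Nat.cast_nonneg _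
      linarith
end
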